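/- arXiv:2102.11711 — 10 statements merged into one kernel-verified Lean document; each statement's English description precedes it below -/
import Mathlib

section
/- Let α ∈ (0,1) and τ > 0. If λ₁ > 0 is a real zero of f(p) = 1 − α e^{−τp} − p, then α τ e^{−τλ₁} < 1, and if λ₂ < 0 is a real zero of f, then α τ e^{−τλ₂} > 1. In particular, α τ e^{−τλ} ≠ 1 at every real zero λ of f, i.e. f'(λ) ≠ 0, so the real characteristic roots λ₁ and λ₂ are simple and the denominators α τ e^{−τλᵢ} − 1 appearing in the spectral projector formula are nonzero. -/
/-! At a zero `l` of `f`, `α e^{-τl} = 1 - l`, so `f'(l) = τ(1 - l) - 1`. Since `α < 1` this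
gives `(1 - l) e^{τl} < 1`, and `1 + τl ≤ e^{τl}` turns it into `(1 - l)(1 + τl) < 1`,
i.e. `l · f'(l) < 0`: the sign of `f'` at a root is opposite to the sign of the root. -/

/-- The real characteristic function of the Suarez–Schopf model at the zero equilibrium:
`f p = 1 - α * exp (-τ * p) - p`. -/
noncomputable def SSchar (α τ p : ℝ) : ℝ := 1 - α * Real.exp (-τ * p) - p

open Real

theorem SSchar_eq_zero_iff {α τ l : ℝ} : SSchar α τ l = 0 ↔ α * exp (-τ * l) = 1 - l := by
  unfold SSchar
  constructor <;> intro h <;> linarith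

theorem mul_sub_one_neg_of_SSchar_eq_zero {α τ l : ℝ} (hα : α ∈ Set.Ioo (0 : ℝ) 1)
    (hz : SSchar α τ l = 0) : l * (α * τ * exp (-τ * l) - 1) < 0 := by
  rw [SSchar_eq_zero_iff] at hz
  have hexp : 0 < exp (-τ * l) := exp_pos _
  have hl : 0 < 1 - l := hz ▸ mul_pos hα.1 hexp
  have hlt : (1 - l) * exp (τ * l) < 1 := by
    calc (1 - l) * exp (τ * l) = α * (exp (-τ * l) * exp (τ * l)) := by rw [← hz]; ring
      _ = α := by rw [← exp_add]; simp
      _ < 1 := hα.2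
  have hle : (1 - l) * (τ * l + 1) ≤ (1 - l) * exp (τ * l) :=
    mul_le_mul_of_nonneg_left (add_one_le_exp _) hl.le
  calc l * (α * τ * exp (-τ * l) - 1) = (1 - l) * (τ * l + 1) - 1 := by
        rw [show α * τ * exp (-τ * l) = τ * (1 - l) by rw [← hz]; ring]; ring
    _ < 0 := by linarith

theorem suarez_schopf_real_roots_simple_general (α τ : ℝ) (hα : α ∈ Set.Ioo (0 : ℝ) 1) :
    (∀ l : ℝ, 0 < l → SSchar α τ l = 0 → α * τ * Real.exp (-τ * l) < 1) ∧
    (∀ l : ℝ, l < 0 → SSchar α τ l = 0 → 1 < α * τ * Real.exp (-τ * l)) ∧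
    (∀ l : ℝ, SSchar α τ l = 0 →
      α * τ * Real.exp (-τ * l) ≠ 1 ∧ α * τ * Real.exp (-τ * l) - 1 ≠ 0) := by
  have key := fun l (hz : SSchar α τ l = 0) ↦ mul_sub_one_neg_of_SSchar_eq_zero hα hz
  refine ⟨fun l hl hz ↦ ?_, fun l hl hz ↦ ?_, fun l hz ↦ ?_⟩
  · exact sub_neg.mp (neg_of_mul_neg_right (key l hz) hl.le)
  · exact sub_pos.mp (pos_of_mul_neg_right (key l hz) hl.le)
  · have hne : α * τ * exp (-τ * l) - 1 ≠ 0 := right_ne_zero_of_mul (key l hz).ne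
    exact ⟨sub_ne_zero.mp hne, hne⟩

/-- Let `α ∈ (0,1)`, `τ > 0`. At a positive real zero `λ₁` of `f` one has `ατ e^{-τλ₁} < 1`,
at a negative real zero `λ₂` one has `ατ e^{-τλ₂} > 1`; in particular `ατ e^{-τλ} ≠ 1`
(i.e. `f'(λ) ≠ 0`) at every real zero `λ`, so the real characteristic roots are simple and
the denominators `ατ e^{-τλᵢ} - 1` of the spectral projector are nonzero. -/
theorem suarez_schopf_real_roots_simple (α τ : ℝ) (hα : α ∈ Set.Ioo (0 : ℝ) 1) (hτ : 0 < τ) :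
    (∀ l : ℝ, 0 < l → SSchar α τ l = 0 → α * τ * Real.exp (-τ * l) < 1) ∧
    (∀ l : ℝ, l < 0 → SSchar α τ l = 0 → 1 < α * τ * Real.exp (-τ * l)) ∧
    (∀ l : ℝ, SSchar α τ l = 0 →
      α * τ * Real.exp (-τ * l) ≠ 1 ∧ α * τ * Real.exp (-τ * l) - 1 ≠ 0) :=
  suarez_schopf_real_roots_simple_general α τ hα
end

section
/- If α ∈ (0, 1/2] and τ > 0, then the characteristic equation 3α − 2 − α e^{−τp} − p = 0 has no purely imaginary roots: there is no ζ ∈ ℝ such that p = iζ satisfies the equation. -/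
/-- The complex characteristic function of the Suarez–Schopf model at the symmetric
equilibria `±√(1-α)`: `p ↦ 3α - 2 - α * exp (-τ * p) - p`, `p ∈ ℂ`. -/
noncomputable def SScharSymC (α τ : ℝ) (p : ℂ) : ℂ :=
  3 * (α : ℂ) - 2 - (α : ℂ) * Complex.exp (-(τ : ℂ) * p) - p

/-!
On the imaginary axis the real part of the characteristic function is
`3α - 2 - α cos(τζ)`, which for `α ≤ 1/2` can vanish only if `cos(τζ) = -1` (and `α = 1/2`).
Then `sin(τζ) = 0`, so the imaginary part `α sin(τζ) - ζ` forces `ζ = 0`, contradicting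
`cos 0 = 1`.
-/

open Complex in
theorem SScharSymC_I_mul_ofReal_re (α τ ζ : ℝ) :
    (SScharSymC α τ (I * ζ)).re = 3 * α - 2 - α * Real.cos (τ * ζ) := by
  simp [SScharSymC, exp_re, mul_comm]

open Complex in
theorem SScharSymC_I_mul_ofReal_im (α τ ζ : ℝ) :
    (SScharSymC α τ (I * ζ)).im = α * Real.sin (τ * ζ) - ζ := by
  simp [SScharSymC, exp_im, mul_comm]

theorem Real.cos_eq_neg_one_of_mul_cos_eq {α θ : ℝ} (hα : α ≤ 1 / 2)
    (h : α * Real.cos θ = 3 * α - 2) : Real.cos θ = -1 := by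
  nlinarith [Real.neg_one_le_cos θ, Real.cos_le_one θ]

theorem suarez_schopf_no_imaginary_roots_general (α τ : ℝ) (hα : α ∈ Set.Ioc (0 : ℝ) (1 / 2)) :
    ¬ ∃ ζ : ℝ, SScharSymC α τ (Complex.I * (ζ : ℂ)) = 0 := by
  rintro ⟨ζ, hroot⟩
  have hre := SScharSymC_I_mul_ofReal_re α τ ζ
  have him := SScharSymC_I_mul_ofReal_im α τ ζ
  rw [hroot, Complex.zero_re] at hre
  rw [hroot, Complex.zero_im] at him
  have hcos : Real.cos (τ * ζ) = -1 := Real.cos_eq_neg_one_of_mul_cos_eq hα.2 (by linarith)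
  have hsin : Real.sin (τ * ζ) = 0 := Real.sin_eq_zero_iff_cos_eq.mpr (Or.inr hcos)
  have hζ : ζ = 0 := by rw [hsin] at him; linarith
  rw [hζ, mul_zero, Real.cos_zero] at hcos
  norm_num at hcos

/-- If `α ∈ (0, 1/2]` and `τ > 0`, then the characteristic equation
`3α - 2 - α e^{-τp} - p = 0` has no purely imaginary roots `p = iζ`, `ζ ∈ ℝ`. -/
theorem suarez_schopf_no_imaginary_roots (α τ : ℝ) (hα : α ∈ Set.Ioc (0 : ℝ) (1 / 2))
    (hτ : 0 < τ) :
    ¬ ∃ ζ : ℝ, SScharSymC α τ (Complex.I * (ζ : ℂ)) = 0 :=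
  suarez_schopf_no_imaginary_roots_general α τ hα
end

section
/- Let α ∈ (1/2, 1), τ > 0 and ζ > 0. Then p = iζ is a root of the characteristic equation 3α − 2 − α e^{−τp} − p = 0 if and only if ζ = √(α² − (3α − 2)²) and there exists a nonnegative integer k such that τ = (arccos((3α − 2)/α) + 2πk) / √(α² − (3α − 2)²). -/
/-! On the imaginary axis the characteristic equation splits into `α cos(τζ) = 3α - 2` and
`α sin(τζ) = ζ`, i.e. `(3α - 2, ζ)` is the point of angle `τζ` on the circle of radius `α`.
Hence `ζ² = α² - (3α - 2)²`, and since `ζ > 0` puts the angle in the upper half plane, it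
equals `arccos((3α - 2)/α)` modulo `2π`; positivity of `τζ` makes the multiple of `2π`
nonnegative. -/

open Real

theorem SScharSymC_I_mul_eq_zero_iff (α τ ζ : ℝ) :
    SScharSymC α τ (Complex.I * ζ) = 0 ↔
      α * cos (τ * ζ) = 3 * α - 2 ∧ α * sin (τ * ζ) = ζ := by
  rw [SScharSymC, show -(τ : ℂ) * (Complex.I * ζ) = ((-(τ * ζ) : ℝ) : ℂ) * Complex.I by
    push_cast; ring, Complex.ext_iff]
  simp only [Complex.sub_re, Complex.sub_im, Complex.mul_re, Complex.mul_im, Complex.ofReal_re,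
    Complex.ofReal_im, Complex.exp_ofReal_mul_I_re, Complex.exp_ofReal_mul_I_im, Complex.I_re,
    Complex.I_im, Complex.zero_re, Complex.zero_im, cos_neg, sin_neg]
  constructor <;> rintro ⟨h₁, h₂⟩ <;> constructor <;> norm_num at * <;> linarith

theorem cos_eq_and_sin_pos_iff {c θ : ℝ} (hc₁ : -1 < c) (hc₂ : c < 1) :
    cos θ = c ∧ 0 < sin θ ↔ ∃ k : ℤ, θ = arccos c + k * (2 * π) := by
  have hsin_arccos : 0 < sin (arccos c) := sin_pos_of_pos_of_lt_pi (arccos_pos.2 hc₂)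
    (arccos_lt_pi.2 hc₁)
  constructor
  · rintro ⟨hcos, hsin⟩
    rw [← cos_arccos hc₁.le hc₂.le, cos_eq_cos_iff] at hcos
    obtain ⟨k, hk | hk⟩ := hcos
    · exact ⟨-k, by push_cast; linarith⟩
    · -- the other branch puts `θ` at `-arccos c` modulo `2π`, where the sine is negative
      have : sin θ = -sin (arccos c) := by
        rw [show θ = -arccos c + k * (2 * π) by linarith, sin_add_int_mul_two_pi, sin_neg]
      linarith
  · rintro ⟨k, rfl⟩
    rw [cos_add_int_mul_two_pi, sin_add_int_mul_two_pi, cos_arccos hc₁.le hc₂.le]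
    exact ⟨rfl, hsin_arccos⟩

theorem cos_eq_and_sin_pos_iff_of_pos {c θ : ℝ} (hc₁ : -1 < c) (hc₂ : c < 1) (hθ : 0 < θ) :
    cos θ = c ∧ 0 < sin θ ↔ ∃ k : ℕ, θ = arccos c + 2 * π * k := by
  rw [cos_eq_and_sin_pos_iff hc₁ hc₂]
  constructor
  · rintro ⟨k, rfl⟩
    have hk : 0 ≤ k := by
      by_contra! hk
      have : (k : ℝ) ≤ -1 := by exact_mod_cast Int.le_sub_one_of_lt hk
      nlinarith [arccos_le_pi c, pi_pos]
    refine ⟨k.toNat, ?_⟩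
    rw [show ((k.toNat : ℕ) : ℝ) = k by exact_mod_cast Int.toNat_of_nonneg hk]
    ring
  · rintro ⟨k, rfl⟩
    exact ⟨k, by push_cast; ring⟩

theorem mul_cos_eq_and_mul_sin_eq_iff {a b ζ θ : ℝ} (hb : |b| < a) (hζ : 0 < ζ) (hθ : 0 < θ) :
    a * cos θ = b ∧ a * sin θ = ζ ↔
      ζ = √(a ^ 2 - b ^ 2) ∧ ∃ k : ℕ, θ = arccos (b / a) + 2 * π * k := by
  obtain ⟨hb₁, hb₂⟩ := abs_lt.1 hb
  have ha : 0 < a := by linarith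
  have hc₁ : -1 < b / a := by rw [lt_div_iff₀ ha]; linarith
  have hc₂ : b / a < 1 := (div_lt_one ha).2 hb₂
  have hsq_sin (hcos : a * cos θ = b) : (a * sin θ) * (a * sin θ) = a ^ 2 - b ^ 2 := by
    rw [← hcos]; linear_combination a ^ 2 * sin_sq_add_cos_sq θ
  rw [← cos_eq_and_sin_pos_iff_of_pos hc₁ hc₂ hθ, eq_div_iff ha.ne', mul_comm (cos θ),
    eq_comm (a := ζ), sqrt_eq_iff_mul_self_eq_of_pos hζ]
  constructor
  · rintro ⟨hcos, hsin⟩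
    refine ⟨by rw [← hsin, hsq_sin hcos], hcos, ?_⟩
    exact pos_of_mul_pos_right (hsin ▸ hζ) ha.le
  · rintro ⟨hζsq, hcos, hsin⟩
    refine ⟨hcos, ?_⟩
    rw [← mul_self_inj (by positivity) hζ.le, hsq_sin hcos, hζsq]

/-- Let `α ∈ (1/2, 1)`, `τ > 0` and `ζ > 0`. Then `p = iζ` is a root of
`3α - 2 - α e^{-τp} - p = 0` if and only if `ζ = √(α² - (3α-2)²)` and
`τ = (arccos((3α-2)/α) + 2πk) / √(α² - (3α-2)²)` for some nonnegative integer `k`. -/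
theorem suarez_schopf_imaginary_roots_param (α τ ζ : ℝ)
    (hα : α ∈ Set.Ioo (1 / 2 : ℝ) 1) (hτ : 0 < τ) (hζ : 0 < ζ) :
    SScharSymC α τ (Complex.I * (ζ : ℂ)) = 0 ↔
      ζ = Real.sqrt (α ^ 2 - (3 * α - 2) ^ 2) ∧
      ∃ k : ℕ, τ = (Real.arccos ((3 * α - 2) / α) + 2 * Real.pi * k) /
        Real.sqrt (α ^ 2 - (3 * α - 2) ^ 2) := by
  obtain ⟨hα₁, hα₂⟩ := hα
  have hb : |3 * α - 2| < α := abs_lt.2 ⟨by linarith, by linarith⟩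
  have hω : 0 < √(α ^ 2 - (3 * α - 2) ^ 2) :=
    sqrt_pos.2 (sub_pos.2 (sq_lt_sq' (by linarith) (by linarith)))
  rw [SScharSymC_I_mul_eq_zero_iff, mul_cos_eq_and_mul_sin_eq_iff hb hζ (mul_pos hτ hζ)]
  refine and_congr_right fun hζω => exists_congr fun k => ?_
  rw [hζω, eq_div_iff hω.ne']
end

section
/- Let α ∈ (1/2, 1) and 0 < τ < arccos((3α − 2)/α) / √(α² − (3α − 2)²). Then every complex root p of the characteristic equation 3α − 2 − α e^{−τp} − p = 0 satisfies Re p < 0; that is, the symmetric equilibria ±√(1−α) are linearly stable for parameters below the neutral curve. -/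
open Real

lemma mul_sin_le_mul_sin {u v : ℝ} (hu : 0 < u) (huv : u ≤ v) (hv : v ≤ π) :
    u * sin v ≤ v * sin u := by
  rcases huv.eq_or_lt with rfl | huv
  · exact le_rfl
  have hsecant := strictConcaveOn_sin_Icc.secant_strict_mono (a := 0) ⟨le_rfl, pi_pos.le⟩
    ⟨hu.le, huv.le.trans hv⟩ ⟨(hu.trans huv).le, hv⟩ hu.ne' (hu.trans huv).ne' huv
  simp only [sin_zero, sub_zero] at hsecant
  rw [div_lt_div_iff₀ (hu.trans huv) hu] at hsecant
  linarith

lemma lt_of_le_mul_sin {c θ φ : ℝ} (hc : 0 ≤ c) (hθ : 0 < θ) (hθ' : θ ≤ π / 2)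
    (hcθ : c * sin θ < θ) (hφ : φ ≤ c * sin φ) : φ < θ := by
  by_contra! hθφ
  have hsinθ : 0 < sin θ := sin_pos_of_pos_of_lt_pi hθ (by linarith [pi_pos])
  have hc' : c < π / 2 := by
    have hjordan := mul_le_sin hθ.le hθ'
    rw [div_mul_eq_mul_div, div_le_iff₀ pi_pos] at hjordan
    nlinarith
  have hφ' : φ < π / 2 := by nlinarith [sin_le_one φ]
  have hsinφ : 0 < sin φ := by nlinarith
  nlinarith [mul_sin_le_mul_sin hθ hθφ (by linarith [pi_pos])]

section CharacteristicEquation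

variable {a b τ : ℝ}

lemma cos_arccos_div (hab : |a| < b) : cos (arccos (a / b)) = a / b := by
  have hb : 0 < b := (abs_nonneg a).trans_lt hab
  obtain ⟨hlo, hhi⟩ := abs_lt.1 hab
  exact cos_arccos ((le_div_iff₀ hb).2 (by linarith)) ((div_le_one hb).2 hhi.le)

lemma mul_sin_arccos_div (hb : 0 < b) : b * sin (arccos (a / b)) = √(b ^ 2 - a ^ 2) := by
  rw [sin_arccos, ← sqrt_sq hb.le, ← sqrt_mul (sq_nonneg b), sqrt_sq hb.le]
  congr 1
  field_simp

lemma re_im_of_add_mul_exp_eq {p : ℂ} (hp : p + b * Complex.exp (-(τ : ℂ) * p) = a) :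
    p.re = a - b * rexp (-τ * p.re) * cos (τ * p.im) ∧
      p.im = b * rexp (-τ * p.re) * sin (τ * p.im) := by
  have hre := congrArg Complex.re hp
  have him := congrArg Complex.im hp
  simp only [neg_mul, Complex.add_re, Complex.mul_re, Complex.ofReal_re, Complex.exp_re,
    Complex.neg_re, Complex.ofReal_im, zero_mul, sub_zero, Complex.neg_im, Complex.mul_im, add_zero,
    cos_neg, Complex.exp_im, sin_neg, mul_neg, neg_zero, Complex.add_im] at hre him ⊢
  constructor <;> linarith

lemma mul_lt_one_of_lt_arccos (hab : |a| < b) (hτ : 0 ≤ τ)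
    (hcrit : τ * √(b ^ 2 - a ^ 2) < arccos (a / b)) : a * τ < 1 := by
  rcases le_or_gt a 0 with ha | ha
  · nlinarith
  have hb : 0 < b := (abs_nonneg a).trans_lt hab
  set θ := arccos (a / b)
  have hθ : 0 < θ := arccos_pos.2 ((div_lt_one hb).2 (abs_lt.1 hab).2)
  have hθ' : θ < π / 2 := arccos_lt_pi_div_two.2 (div_pos ha hb)
  have hcos : 0 < cos θ := cos_pos_of_mem_Ioo ⟨by linarith, hθ'⟩
  have hsin : 0 < sin θ := sin_pos_of_pos_of_lt_pi hθ (by linarith [pi_pos])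
  have htan : θ * cos θ < sin θ := by
    have := lt_tan hθ hθ'
    rwa [tan_eq_sin_div_cos, lt_div_iff₀ hcos] at this
  rw [← mul_sin_arccos_div hb] at hcrit
  have ha_eq : a = b * cos θ := by rw [cos_arccos_div hab]; field_simp
  rw [ha_eq]
  nlinarith [mul_lt_mul_of_pos_right hcrit hcos]

lemma mul_one_sub_exp_le {x : ℝ} (hx : 0 ≤ x) (hτ : 0 ≤ τ) (haτ : a * τ ≤ 1) :
    a * (1 - rexp (-τ * x)) ≤ x := by
  have hexp : rexp (-τ * x) ≤ 1 := exp_le_one_iff.2 (by nlinarith)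
  have hlin : 1 - τ * x ≤ rexp (-τ * x) := by linarith [add_one_le_exp (-τ * x)]
  rcases le_or_gt a 0 with ha | ha <;> nlinarith

lemma div_lt_cos_of_char_eqs (hab : |a| < b) (hτ : 0 ≤ τ)
    (hcrit : τ * √(b ^ 2 - a ^ 2) < arccos (a / b)) {x y r : ℝ} (hx : 0 ≤ x) (hr : 0 ≤ r)
    (hrb : r ≤ b) (hre : x = a - r * cos (τ * y)) (him : y = r * sin (τ * y)) :
    a / b < cos (τ * y) := by
  wlog hy : 0 ≤ y generalizing y
  · have := this (y := -y) (by rwa [mul_neg, cos_neg])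
      (by rw [mul_neg, sin_neg]; linarith) (by linarith)
    rwa [mul_neg, cos_neg] at this
  have hb : 0 < b := (abs_nonneg a).trans_lt hab
  suffices hangle : τ * y < arccos (a / b) by
    calc a / b = cos (arccos (a / b)) := (cos_arccos_div hab).symm
      _ < cos (τ * y) := cos_lt_cos_of_nonneg_of_le_pi (by positivity) (arccos_le_pi _) hangle
  rcases le_or_gt a 0 with ha | ha
  · have hpyth : (x - a) ^ 2 + y ^ 2 = r ^ 2 := by
      linear_combination (x - a - r * cos (τ * y)) * hre + (y + r * sin (τ * y)) * him +
        r ^ 2 * sin_sq_add_cos_sq (τ * y)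
    have hy' : y ≤ √(b ^ 2 - a ^ 2) := (le_sqrt hy (by nlinarith [abs_nonneg a])).2 (by nlinarith)
    exact (mul_le_mul_of_nonneg_left hy' hτ).trans_lt hcrit
  · refine lt_of_le_mul_sin (c := τ * b) (by positivity)
      (arccos_pos.2 ((div_lt_one hb).2 (abs_lt.1 hab).2))
      (arccos_le_pi_div_two.2 (div_pos ha hb).le)
      (by rwa [mul_assoc, mul_sin_arccos_div hb]) ?_
    have hsin : 0 ≤ sin (τ * y) := by
      by_contra! hneg
      have hy0 : y = 0 := by nlinarith [mul_nonneg hr (neg_nonneg.2 hneg.le)]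
      simp [hy0] at hneg
    nlinarith [mul_nonneg (mul_nonneg hτ hsin) (sub_nonneg.2 hrb)]

theorem re_neg_of_add_mul_exp_eq (hab : |a| < b) (hτ : 0 ≤ τ)
    (hcrit : τ * √(b ^ 2 - a ^ 2) < arccos (a / b)) {p : ℂ}
    (hp : p + b * Complex.exp (-(τ : ℂ) * p) = a) : p.re < 0 := by
  by_contra! hx
  have hb : 0 < b := (abs_nonneg a).trans_lt hab
  obtain ⟨hre, him⟩ := re_im_of_add_mul_exp_eq hp
  have hexp : rexp (-τ * p.re) ≤ 1 := exp_le_one_iff.2 (by nlinarith)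
  have hcos := div_lt_cos_of_char_eqs hab hτ hcrit hx (by positivity)
    (mul_le_of_le_one_right hb.le hexp) hre him
  have hlt : p.re < a * (1 - rexp (-τ * p.re)) := by
    rw [div_lt_iff₀ hb] at hcos
    nlinarith [mul_lt_mul_of_pos_left hcos (exp_pos (-τ * p.re))]
  exact hlt.not_ge (mul_one_sub_exp_le hx hτ (mul_lt_one_of_lt_arccos hab hτ hcrit).le)

end CharacteristicEquation

/-- Let `α ∈ (1/2, 1)` and `0 < τ < arccos((3α-2)/α) / √(α² - (3α-2)²)` (below the neutral
curve). Then every complex root of `3α - 2 - α e^{-τp} - p = 0` satisfies `Re p < 0`, i.e.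
the symmetric equilibria `±√(1-α)` are linearly stable. -/
theorem suarez_schopf_stability_below_neutral_curve (α τ : ℝ)
    (hα : α ∈ Set.Ioo (1 / 2 : ℝ) 1) (hτ : 0 < τ)
    (hτ' : τ < Real.arccos ((3 * α - 2) / α) / Real.sqrt (α ^ 2 - (3 * α - 2) ^ 2)) :
    ∀ p : ℂ, SScharSymC α τ p = 0 → p.re < 0 := by
  intro p hp
  obtain ⟨hα₁, hα₂⟩ := hα
  refine re_neg_of_add_mul_exp_eq (a := 3 * α - 2) (b := α) (abs_lt.2 ⟨by linarith, by linarith⟩)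
    hτ.le ?_ ?_
  · rwa [lt_div_iff₀ (sqrt_pos.2 (by nlinarith))] at hτ'
  · rw [SScharSymC] at hp
    push_cast
    linear_combination -hp
end

section
/- Let α ∈ (0, 1/2] and τ > 0 be arbitrary. Then every complex root p of the characteristic equation 3α − 2 − α e^{−τp} − p = 0 satisfies Re p < 0; that is, for α ≤ 1/2 the symmetric equilibria ±√(1−α) are linearly stable for all delays. -/
/-!
A root `p` with `Re p ≥ 0` and `τ > 0` has `w = e^{-τp}` in the closed unit disc and
`p = 3α - 2 - αw`, so `Re p ≤ 4α - 2 ≤ 0`. Equality throughout forces `α = 1/2` and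
`w = -1`, hence `p = 0`; but then `w = e^0 = 1`.
-/

open Complex

lemma Complex.eq_neg_one_of_norm_le_one_of_re_eq_neg_one {w : ℂ} (hw : ‖w‖ ≤ 1)
    (hre : w.re = -1) : w = -1 := by
  have him : w.im = 0 :=
    abs_re_eq_norm.mp (le_antisymm (abs_re_le_norm w) (by rwa [hre, abs_neg, abs_one]))
  exact Complex.ext (by simp [hre]) (by simp [him])

lemma Complex.norm_exp_neg_mul_le_one {τ : ℝ} (hτ : 0 ≤ τ) {p : ℂ} (hp : 0 ≤ p.re) :
    ‖exp (-(τ : ℂ) * p)‖ ≤ 1 := by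
  rw [norm_exp, Real.exp_le_one_iff]
  simpa using mul_nonneg hτ hp

lemma eq_zero_and_eq_neg_one_of_eq_sub_mul_of_re_nonneg {α : ℝ} (hα₀ : 0 < α)
    (hα : α ≤ 1 / 2) {p w : ℂ} (hw : ‖w‖ ≤ 1) (hpw : p = 3 * α - 2 - α * w)
    (hp : 0 ≤ p.re) : p = 0 ∧ w = -1 := by
  have hpre : p.re = 3 * α - 2 - α * w.re := by simp [hpw]
  have hwre : -1 ≤ w.re := by linarith [neg_abs_le w.re, abs_re_le_norm w]
  have hwre' : w.re = -1 := by nlinarith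
  have hw' : w = -1 := eq_neg_one_of_norm_le_one_of_re_eq_neg_one hw hwre'
  have hα' : α = 1 / 2 := by
    rw [hwre'] at hpre
    linarith
  exact ⟨by rw [hpw, hw', hα']; norm_num, hw'⟩

/-- Let `α ∈ (0, 1/2]` and `τ > 0` be arbitrary. Then every complex root of
`3α - 2 - α e^{-τp} - p = 0` satisfies `Re p < 0`, i.e. for `α ≤ 1/2` the symmetric
equilibria `±√(1-α)` are linearly stable for all delays. -/
theorem suarez_schopf_stability_small_alpha (α τ : ℝ)
    (hα : α ∈ Set.Ioc (0 : ℝ) (1 / 2)) (hτ : 0 < τ) :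
    ∀ p : ℂ, SScharSymC α τ p = 0 → p.re < 0 := by
  intro p hroot
  by_contra! hp
  have hpw : p = 3 * α - 2 - α * exp (-(τ : ℂ) * p) := by
    unfold SScharSymC at hroot
    linear_combination -hroot
  obtain ⟨rfl, hw⟩ := eq_zero_and_eq_neg_one_of_eq_sub_mul_of_re_nonneg hα.1 hα.2
    (norm_exp_neg_mul_le_one hτ.le hp) hpw hp
  norm_num at hw
end

section
/- Let α ∈ (0,1) and τ > 0. There exists λ > 0 such that both λ and −λ are zeros of f(p) = 1 − α e^{−τp} − p if and only if τ = log((1 + √(1 − α²))/α) / √(1 − α²); and in that case necessarily λ = √(1 − α²). Equivalently, the positive and negative real characteristic roots λ₁, λ₂ satisfy λ₁ + λ₂ = 0 exactly on this curve. -/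
open Real Set

theorem ConcaveOn.apply_mul_pos {f : ℝ → ℝ} (hf : ConcaveOn ℝ univ f) (h0 : 0 < f 0)
    {b c : ℝ} (hb : 0 ≤ f b) (hc₀ : 0 ≤ c) (hc₁ : c < 1) : 0 < f (c * b) := by
  have h := hf.2 (mem_univ 0) (mem_univ b) (sub_nonneg.2 hc₁.le) hc₀ (sub_add_cancel 1 c)
  simp only [smul_eq_mul, mul_zero, zero_add] at h
  nlinarith

theorem ConcaveOn.eq_of_apply_eq_zero {f : ℝ → ℝ} (hf : ConcaveOn ℝ univ f) (h0 : 0 < f 0)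
    {a b : ℝ} (hab : 0 < a * b) (ha : f a = 0) (hb : f b = 0) : a = b := by
  have hb₀ : b ≠ 0 := by rintro rfl; simp at hab
  have hq : 0 < a / b := by
    simpa [mul_div_mul_right _ _ hb₀] using div_pos hab (mul_self_pos.2 hb₀)
  have no_zero_inside : ∀ {x y : ℝ}, y ≠ 0 → 0 < x / y → x / y < 1 → f x = 0 → f y = 0 → False :=
    fun hy hpos hlt hx hy' => by
      have := hf.apply_mul_pos h0 hy'.ge hpos.le hlt
      rw [div_mul_cancel₀ _ hy, hx] at this
      exact this.false
  rcases lt_trichotomy (a / b) 1 with h | h | h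
  · exact (no_zero_inside hb₀ hq h ha hb).elim
  · exact (div_eq_one_iff_eq hb₀).1 h
  · refine (no_zero_inside (y := a) ?_ ?_ ?_ hb ha).elim
    · rintro rfl; simp at hab
    · rw [← inv_div]; exact inv_pos.2 hq
    · rw [← inv_div]; exact inv_lt_one_of_one_lt₀ h

theorem concaveOn_SSchar {α : ℝ} (hα : 0 ≤ α) (τ : ℝ) : ConcaveOn ℝ univ (SSchar α τ) := by
  have hexp : ConvexOn ℝ univ fun p => exp (-τ * p) :=
    convexOn_exp.comp_linearMap (LinearMap.mul ℝ ℝ (-τ))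
  exact ((concaveOn_const 1 convex_univ).sub (hexp.smul hα)).sub (convexOn_id convex_univ)

theorem SSchar_eq_zero_and_neg_iff_sq_add_sq {α τ l : ℝ} (hα : 0 < α) (hl : 0 < l) :
    SSchar α τ l = 0 ∧ SSchar α τ (-l) = 0 ↔ α ^ 2 + l ^ 2 = 1 ∧ τ * l = log ((1 + l) / α) := by
  have hneg : SSchar α τ (-l) = 0 ↔ α * exp (τ * l) = 1 + l := by
    unfold SSchar
    rw [neg_mul_neg]
    constructor <;> intro h <;> linarith
  have hlog : α * exp (τ * l) = 1 + l ↔ τ * l = log ((1 + l) / α) := by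
    rw [mul_comm, ← eq_div_iff hα.ne']
    exact ⟨fun h => by rw [← h, log_exp], fun h => by rw [h, exp_log (by positivity)]⟩
  rw [hneg, ← hlog]
  refine and_congr_left fun he => ?_
  have hinv : exp (-τ * l) * exp (τ * l) = 1 := by rw [← exp_add]; simp
  have hprod : SSchar α τ l * (1 + l) = 1 - l ^ 2 - α ^ 2 := by
    unfold SSchar
    linear_combination (α * exp (-τ * l)) * he - α ^ 2 * hinv
  rw [← mul_left_inj' (by positivity : 1 + l ≠ 0), zero_mul, hprod]
  constructor <;> intro h <;> linarith

theorem SSchar_eq_zero_and_neg_iff_eq_sqrt {α τ l : ℝ} (hα : α ∈ Ioo 0 1) (hl : 0 < l) :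
    SSchar α τ l = 0 ∧ SSchar α τ (-l) = 0 ↔
      l = √(1 - α ^ 2) ∧ τ = log ((1 + √(1 - α ^ 2)) / α) / √(1 - α ^ 2) := by
  have hsq : α ^ 2 + l ^ 2 = 1 ↔ l = √(1 - α ^ 2) := by
    rw [eq_comm (a := l), sqrt_eq_iff_mul_self_eq_of_pos hl]
    constructor <;> intro h <;> linarith
  rw [SSchar_eq_zero_and_neg_iff_sq_add_sq hα.1 hl, hsq]
  exact and_congr_right fun h => by subst h; exact (eq_div_iff hl.ne').symm

theorem suarez_schopf_symmetric_roots_curve_general (α τ : ℝ) (hα : α ∈ Set.Ioo (0 : ℝ) 1) :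
    ((∃ l : ℝ, 0 < l ∧ SSchar α τ l = 0 ∧ SSchar α τ (-l) = 0) ↔
      τ = Real.log ((1 + Real.sqrt (1 - α ^ 2)) / α) / Real.sqrt (1 - α ^ 2)) ∧
    (∀ l : ℝ, 0 < l → SSchar α τ l = 0 → SSchar α τ (-l) = 0 →
      l = Real.sqrt (1 - α ^ 2)) ∧
    (∀ l₁ l₂ : ℝ, 0 < l₁ → SSchar α τ l₁ = 0 → l₂ < 0 → SSchar α τ l₂ = 0 →
      (l₁ + l₂ = 0 ↔
        τ = Real.log ((1 + Real.sqrt (1 - α ^ 2)) / α) / Real.sqrt (1 - α ^ 2))) := by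
  set s := √(1 - α ^ 2)
  have hs : 0 < s := sqrt_pos.2 (by nlinarith [hα.1, hα.2])
  have hpair := fun l (hl : 0 < l) => SSchar_eq_zero_and_neg_iff_eq_sqrt (τ := τ) hα hl
  have hsame : ∀ {a b}, 0 < a * b → SSchar α τ a = 0 → SSchar α τ b = 0 → a = b :=
    (concaveOn_SSchar hα.1.le τ).eq_of_apply_eq_zero (by simp [SSchar, hα.2])
  refine ⟨⟨fun ⟨l, hl, h₁, h₂⟩ => ((hpair l hl).1 ⟨h₁, h₂⟩).2,
    fun h => ⟨s, hs, (hpair s hs).2 ⟨rfl, h⟩⟩⟩,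
    fun l hl h₁ h₂ => ((hpair l hl).1 ⟨h₁, h₂⟩).1,
    fun l₁ l₂ hl₁ h₁ hl₂ h₂ => ⟨fun hsum => ?_, fun h => ?_⟩⟩
  · obtain rfl : l₂ = -l₁ := by linarith
    exact ((hpair l₁ hl₁).1 ⟨h₁, h₂⟩).2
  · obtain ⟨hs₁, hs₂⟩ := (hpair s hs).2 ⟨rfl, h⟩
    rw [hsame (by positivity) h₁ hs₁, hsame (by nlinarith) h₂ hs₂, add_neg_cancel]

/-- Let `α ∈ (0,1)`, `τ > 0`. There exists `λ > 0` with both `λ` and `-λ` zeros of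
`f p = 1 - α e^{-τp} - p` if and only if `τ = log((1 + √(1-α²))/α)/√(1-α²)`; in that case
necessarily `λ = √(1-α²)`. Equivalently, the positive and negative real characteristic
roots `λ₁, λ₂` satisfy `λ₁ + λ₂ = 0` exactly on this curve. -/
theorem suarez_schopf_symmetric_roots_curve (α τ : ℝ) (hα : α ∈ Set.Ioo (0 : ℝ) 1)
    (hτ : 0 < τ) :
    ((∃ l : ℝ, 0 < l ∧ SSchar α τ l = 0 ∧ SSchar α τ (-l) = 0) ↔
      τ = Real.log ((1 + Real.sqrt (1 - α ^ 2)) / α) / Real.sqrt (1 - α ^ 2)) ∧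
    (∀ l : ℝ, 0 < l → SSchar α τ l = 0 → SSchar α τ (-l) = 0 →
      l = Real.sqrt (1 - α ^ 2)) ∧
    (∀ l₁ l₂ : ℝ, 0 < l₁ → SSchar α τ l₁ = 0 → l₂ < 0 → SSchar α τ l₂ = 0 →
      (l₁ + l₂ = 0 ↔
        τ = Real.log ((1 + Real.sqrt (1 - α ^ 2)) / α) / Real.sqrt (1 - α ^ 2))) :=
  suarez_schopf_symmetric_roots_curve_general α τ hα
end

section
/- For every α ∈ (1/2, 1) the strict inequality log((1 + √(1 − α²))/α) / √(1 − α²) < arccos((3α − 2)/α) / √(α² − (3α − 2)²) holds. Consequently the region Ω_dst = {(τ,α) : λ₁ + λ₂ < 0 on the boundary curve τ = log((1+√(1−α²))/α)/√(1−α²)} lies below the neutral curve, i.e. Ω_dst is contained in the region of linear stability Ω_st. -/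
/-!
Both curves are compared with `τ = 1/α`. Writing `β = √(1 - α²)`, the left side is
`arsinh (β/α) / β`, and `arsinh x < x` for `x > 0` puts it below `1/α`. With `c = (3α - 2)/α`
one has `√(α² - (3α - 2)²) = α √(1 - c²) = α sin (arccos c)`, and `sin θ < θ` for `θ > 0`
puts the right side above `1/α`.
-/

open Real

namespace Real

theorem arsinh_lt_self {x : ℝ} (hx : 0 < x) : arsinh x < x := by
  simpa only [sinh_arsinh] using self_lt_sinh_iff.mpr (arsinh_pos_iff.mpr hx)

theorem sqrt_one_sub_sq_lt_arccos {x : ℝ} (hx : x < 1) : √(1 - x ^ 2) < arccos x :=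
  sin_arccos x ▸ sin_lt (arccos_pos.mpr hx)

theorem log_one_add_sqrt_one_sub_sq_div {α : ℝ} (hα₀ : 0 < α) (hα₁ : α ≤ 1) :
    log ((1 + √(1 - α ^ 2)) / α) = arsinh (√(1 - α ^ 2) / α) := by
  have hβ : √(1 - α ^ 2) ^ 2 = 1 - α ^ 2 := sq_sqrt (by nlinarith)
  have hroot : √(1 + (√(1 - α ^ 2) / α) ^ 2) = α⁻¹ := by
    rw [sqrt_eq_iff_mul_self_eq_of_pos (inv_pos.mpr hα₀)]
    field_simp
    linarith
  rw [arsinh, hroot, add_div, div_eq_mul_inv 1 α, one_mul, add_comm]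

theorem sqrt_sq_sub_sq_div_eq {α b : ℝ} (hα : 0 < α) :
    √(α ^ 2 - b ^ 2) / α = √(1 - (b / α) ^ 2) := by
  rw [show 1 - (b / α) ^ 2 = (α ^ 2 - b ^ 2) / α ^ 2 by field_simp,
    sqrt_div' _ (sq_nonneg α), sqrt_sq hα.le]

end Real

theorem dst_boundary_lt_inv {α : ℝ} (hα : α ∈ Set.Ioo (0 : ℝ) 1) :
    log ((1 + √(1 - α ^ 2)) / α) / √(1 - α ^ 2) < α⁻¹ := by
  obtain ⟨hα₀, hα₁⟩ := hα
  have hβ : 0 < √(1 - α ^ 2) := sqrt_pos.mpr (by nlinarith)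
  rw [log_one_add_sqrt_one_sub_sq_div hα₀ hα₁.le, div_lt_iff₀ hβ, ← div_eq_inv_mul]
  exact arsinh_lt_self (div_pos hβ hα₀)

theorem inv_lt_neutral_curve {α : ℝ} (hα : α ∈ Set.Ioo (1 / 2 : ℝ) 1) :
    α⁻¹ < arccos ((3 * α - 2) / α) / √(α ^ 2 - (3 * α - 2) ^ 2) := by
  obtain ⟨hα₀, hα₁⟩ := hα
  have hpos : 0 < α := by linarith
  have hD : 0 < √(α ^ 2 - (3 * α - 2) ^ 2) := sqrt_pos.mpr (by nlinarith)
  have hc : (3 * α - 2) / α < 1 := by rw [div_lt_one hpos]; linarith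
  rw [lt_div_iff₀ hD, ← div_eq_inv_mul, sqrt_sq_sub_sq_div_eq hpos]
  exact sqrt_one_sub_sq_lt_arccos hc

/-- For every `α ∈ (1/2, 1)` one has
`log((1 + √(1-α²))/α)/√(1-α²) < arccos((3α-2)/α)/√(α² - (3α-2)²)`; consequently every
delay `τ` below the boundary curve of `Ω_dst` is also below the neutral curve, i.e.
`Ω_dst` is contained in the region of linear stability `Ω_st`. -/
theorem suarez_schopf_dst_below_neutral (α : ℝ) (hα : α ∈ Set.Ioo (1 / 2 : ℝ) 1) :
    Real.log ((1 + Real.sqrt (1 - α ^ 2)) / α) / Real.sqrt (1 - α ^ 2) <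
      Real.arccos ((3 * α - 2) / α) / Real.sqrt (α ^ 2 - (3 * α - 2) ^ 2) ∧
    ∀ τ : ℝ, τ < Real.log ((1 + Real.sqrt (1 - α ^ 2)) / α) / Real.sqrt (1 - α ^ 2) →
      τ < Real.arccos ((3 * α - 2) / α) / Real.sqrt (α ^ 2 - (3 * α - 2) ^ 2) := by
  have hα₀ : α ∈ Set.Ioo (0 : ℝ) 1 := ⟨by linarith [hα.1], hα.2⟩
  have key := (dst_boundary_lt_inv hα₀).trans (inv_lt_neutral_curve hα)
  exact ⟨key, fun τ hτ => hτ.trans key⟩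
end

section
/- Let α ∈ (0,1), τ > 0, γ = √(1 + α), R ≥ 0 and t₀ ∈ ℝ. Suppose x : [t₀ − τ, ∞) → ℝ is continuous, differentiable on [t₀, ∞), satisfies x'(t) = x(t) − α x(t − τ) − x(t)³ for all t ≥ t₀, and |x(s)| ≤ γ + R for all s ∈ [t₀ − τ, t₀]. Then |x(t)| ≤ γ + R for all t ≥ t₀ (positive invariance of the balls S_R = {φ : ‖φ‖_∞ ≤ γ + R}). -/
/-!
Method of steps. If `|x| ≤ M` on `[a - τ, a]` with `M ≥ γ`, then on `[a, a + τ]` the delayed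
value `y = x (t - τ)` satisfies `|y| ≤ M`, so whenever `|x t| > M` the velocity points towards
the origin: `u (u - α y - u³) ≤ u² (1 + α - u²) < 0` for `u = x t`. A fencing argument keeps
`|x| ≤ M` on `[a, a + τ]`, and induction over the windows covers `[t₀, ∞)`.
-/

open Set

theorem image_le_of_deriv_right_neg_of_lt {f f' : ℝ → ℝ} {a b M : ℝ}
    (hf : ContinuousOn f (Icc a b)) (hf' : ∀ t ∈ Ico a b, HasDerivWithinAt f (f' t) (Ici t) t)
    (ha : f a ≤ M) (hneg : ∀ t ∈ Ico a b, M < f t → f' t < 0) :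
    ∀ ⦃t⦄, t ∈ Icc a b → f t ≤ M := by
  intro t ht
  refine le_of_forall_pos_le_add fun ε hε => ?_
  refine image_le_of_deriv_right_lt_deriv_boundary hf hf' (B := fun _ => M + ε) (B' := 0)
    (by linarith) (fun _ => hasDerivAt_const _ _) (fun s hs hfs => ?_) ht
  exact hneg s hs (by linarith)

theorem abs_image_le_of_mul_deriv_right_neg {f f' : ℝ → ℝ} {a b M : ℝ}
    (hf : ContinuousOn f (Icc a b)) (hf' : ∀ t ∈ Ico a b, HasDerivWithinAt f (f' t) (Ici t) t)
    (ha : |f a| ≤ M) (hinward : ∀ t ∈ Ico a b, M < |f t| → f t * f' t < 0) :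
    ∀ ⦃t⦄, t ∈ Icc a b → |f t| ≤ M := by
  have hM : 0 ≤ M := (abs_nonneg _).trans ha
  intro t ht
  refine abs_le.2 ⟨?_, ?_⟩
  · have hneg : -f t ≤ M := by
      refine image_le_of_deriv_right_neg_of_lt hf.neg (fun s hs => (hf' s hs).neg)
        (neg_le.1 (abs_le.1 ha).1) (fun s hs hfs => ?_) ht
      rw [Pi.neg_apply] at hfs
      have hfs' : f s < 0 := by linarith
      have := hinward s hs (by rw [abs_of_neg hfs']; linarith)
      linarith [pos_of_mul_neg_right this hfs'.le]
    linarith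
  · refine image_le_of_deriv_right_neg_of_lt hf hf' (le_of_abs_le ha) (fun s hs hfs => ?_) ht
    have hfs' : 0 < f s := by linarith
    exact neg_of_mul_neg_right (hinward s hs (by rw [abs_of_pos hfs']; exact hfs)) hfs'.le

namespace SuarezSchopf

theorem mul_field_neg {α u y : ℝ} (hα : 0 ≤ α) (hu : 1 + α < u ^ 2) (hy : |y| ≤ |u|) :
    u * (u - α * y - u ^ 3) < 0 := by
  have hcross : -(α * u ^ 2) ≤ α * (u * y) := by
    have : |u * y| ≤ u ^ 2 := by
      rw [abs_mul, ← sq_abs u, sq]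
      exact mul_le_mul_of_nonneg_left hy (abs_nonneg u)
    nlinarith [neg_abs_le (u * y)]
  nlinarith

variable {α τ t₀ M : ℝ} {x : ℝ → ℝ}

theorem abs_le_on_next_window (hα : 0 ≤ α) (hτ : 0 ≤ τ) (hM : 1 + α ≤ M ^ 2)
    (hderiv : ∀ t, t₀ ≤ t →
      HasDerivWithinAt x (x t - α * x (t - τ) - (x t) ^ 3) (Ici t₀) t)
    {a : ℝ} (ha : t₀ ≤ a) (hprev : ∀ s ∈ Icc (a - τ) a, |x s| ≤ M) :
    ∀ t ∈ Icc a (a + τ), |x t| ≤ M := by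
  have hxa : |x a| ≤ M := hprev a ⟨by linarith, le_rfl⟩
  have hwindow : Icc a (a + τ) ⊆ Ici t₀ := fun t ht => ha.trans ht.1
  refine abs_image_le_of_mul_deriv_right_neg
    (fun t ht => (hderiv t (hwindow ht)).continuousWithinAt.mono hwindow)
    (fun t ht => (hderiv t (hwindow (Ico_subset_Icc_self ht))).mono
      (Ici_subset_Ici.2 (hwindow (Ico_subset_Icc_self ht)))) hxa ?_
  intro t ht hout
  have hdelay : |x (t - τ)| ≤ M := hprev _ ⟨by linarith [ht.1], by linarith [ht.2]⟩
  have hM0 : 0 ≤ M := (abs_nonneg _).trans hxa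
  refine mul_field_neg hα ?_ (by linarith)
  rw [← sq_abs]
  nlinarith

theorem abs_le_of_abs_le_on_initial (hα : 0 ≤ α) (hτ : 0 < τ) (hM : 1 + α ≤ M ^ 2)
    (hderiv : ∀ t, t₀ ≤ t →
      HasDerivWithinAt x (x t - α * x (t - τ) - (x t) ^ 3) (Ici t₀) t)
    (hinit : ∀ s ∈ Icc (t₀ - τ) t₀, |x s| ≤ M) :
    ∀ t, t₀ ≤ t → |x t| ≤ M := by
  have hsteps : ∀ n : ℕ, ∀ s ∈ Icc (t₀ - τ) (t₀ + n * τ), |x s| ≤ M := by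
    intro n
    induction n with
    | zero => simpa using hinit
    | succ n ih =>
      intro s hs
      have hnτ : (0 : ℝ) ≤ n * τ := by positivity
      rcases le_or_gt s (t₀ + n * τ) with hle | hgt
      · exact ih s ⟨hs.1, hle⟩
      · refine abs_le_on_next_window hα hτ.le hM hderiv (by linarith)
          (fun s' hs' => ih s' ⟨by linarith [hs'.1], hs'.2⟩) s ⟨hgt.le, ?_⟩
        push_cast at hs
        linarith [hs.2]
  intro t ht
  obtain ⟨n, hn⟩ := exists_nat_ge ((t - t₀) / τ)
  rw [div_le_iff₀ hτ] at hn
  exact hsteps n t ⟨by linarith, by linarith⟩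

end SuarezSchopf

theorem suarez_schopf_invariant_balls_general (α τ γ R t₀ : ℝ) (x : ℝ → ℝ)
    (hα : α ∈ Set.Ioo (0 : ℝ) 1) (hτ : 0 < τ) (hγ : γ = Real.sqrt (1 + α)) (hR : 0 ≤ R)
    (hderiv : ∀ t, t₀ ≤ t →
      HasDerivWithinAt x (x t - α * x (t - τ) - (x t) ^ 3) (Set.Ici t₀) t)
    (hinit : ∀ s ∈ Set.Icc (t₀ - τ) t₀, |x s| ≤ γ + R) :
    ∀ t, t₀ ≤ t → |x t| ≤ γ + R := by
  have hγsq : γ ^ 2 = 1 + α := by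
    rw [hγ, Real.sq_sqrt (by linarith [hα.1])]
  have hγ0 : 0 ≤ γ := hγ ▸ Real.sqrt_nonneg _
  have hM : 1 + α ≤ (γ + R) ^ 2 := by nlinarith
  exact SuarezSchopf.abs_le_of_abs_le_on_initial hα.1.le hτ hM hderiv hinit

/-- Positive invariance of the balls `S_R = {φ : ‖φ‖_∞ ≤ γ + R}`, `γ = √(1+α)`, for the
Suarez–Schopf delayed oscillator `x'(t) = x(t) - α x(t-τ) - x(t)³`: if a solution defined
on `[t₀ - τ, ∞)` satisfies `|x(s)| ≤ γ + R` on the initial segment `[t₀ - τ, t₀]`, then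
`|x(t)| ≤ γ + R` for all `t ≥ t₀`. -/
theorem suarez_schopf_invariant_balls (α τ γ R t₀ : ℝ) (x : ℝ → ℝ)
    (hα : α ∈ Set.Ioo (0 : ℝ) 1) (hτ : 0 < τ) (hγ : γ = Real.sqrt (1 + α)) (hR : 0 ≤ R)
    (hcont : ContinuousOn x (Set.Ici (t₀ - τ)))
    (hderiv : ∀ t, t₀ ≤ t →
      HasDerivWithinAt x (x t - α * x (t - τ) - (x t) ^ 3) (Set.Ici t₀) t)
    (hinit : ∀ s ∈ Set.Icc (t₀ - τ) t₀, |x s| ≤ γ + R) :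
    ∀ t, t₀ ≤ t → |x t| ≤ γ + R :=
  suarez_schopf_invariant_balls_general α τ γ R t₀ x hα hτ hγ hR hderiv hinit
end

section
/- Let α ∈ (0,1), τ > 0, γ = √(1 + α) and t₀ ∈ ℝ. Suppose x : [t₀ − τ, ∞) → ℝ is continuous, differentiable on [t₀, ∞) and satisfies x'(t) = x(t) − α x(t − τ) − x(t)³ for all t ≥ t₀. Then limsup_{t→∞} |x(t)| ≤ γ; that is, every solution eventually enters any neighborhood of the dissipativity ball of radius γ = √(1+α). -/
/-!
Along a solution, `v = x²` satisfies `v' = 2x (x - α x(t - τ) - x³)`. If the delayed values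
are bounded by `K` and `r ≥ 1` satisfies `r³ - r > αK`, then `v' ≤ -2r (r³ - r - αK) < 0`
wherever `|x| ≥ r`: the ball of radius `r` is invariant and is entered in finite time.
With `r = K` large, stepping through the intervals `[t₀ + nτ, t₀ + (n + 1)τ]` shows that
solutions are bounded. If `L = limsup |x|` exceeded `γ`, then `L³ - L - αL > 0`, so some
`r < L < K` still satisfy `r³ - r > αK`; as `|x| < K` eventually, `|x| ≤ r < L` eventually,
a contradiction.
-/

open Set Filter Topology

def SolvesSuarezSchopf (α τ t₀ : ℝ) (x : ℝ → ℝ) : Prop :=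
  ∀ t, t₀ ≤ t → HasDerivWithinAt x (x t - α * x (t - τ) - x t ^ 3) (Ici t₀) t

lemma two_mul_mul_sub_cube_le {α K r a b : ℝ} (hα : 0 ≤ α) (hr : 1 ≤ r)
    (hδ : 0 < r ^ 3 - r - α * K) (hra : r ≤ |a|) (hbK : |b| ≤ K) :
    2 * a * (a - α * b - a ^ 3) ≤ -(2 * r * (r ^ 3 - r - α * K)) := by
  have hab : -(|a| * K) ≤ a * b := by
    have : |a * b| ≤ |a| * K := by rw [abs_mul]; gcongr
    linarith [neg_abs_le (a * b)]
  have hexpand :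
      2 * a * (a - α * b - a ^ 3) = 2 * |a| ^ 2 - 2 * α * (a * b) - 2 * (|a| ^ 2) ^ 2 := by
    rw [sq_abs]; ring
  have hmono : r ^ 3 - r ≤ |a| ^ 3 - |a| := by
    have hfactor : 0 ≤ |a| ^ 2 + |a| * r + r ^ 2 - 1 := by nlinarith
    nlinarith [mul_nonneg (sub_nonneg.2 hra) hfactor]
  have hprod : r * (r ^ 3 - r - α * K) ≤ |a| * (|a| ^ 3 - |a| - α * K) :=
    mul_le_mul hra (by linarith) hδ.le (by linarith)
  nlinarith [mul_le_mul_of_nonneg_left hab hα]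

lemma exists_lt_lt_of_cube_sub_pos {α L : ℝ} (hL : 1 < L) (h : 0 < L ^ 3 - L - α * L) :
    ∃ r K, 1 ≤ r ∧ r < L ∧ L < K ∧ 0 < r ^ 3 - r - α * K := by
  have hnear : ∀ᶠ s in 𝓝 (0 : ℝ), 1 < L - s ∧ 0 < (L - s) ^ 3 - (L - s) - α * (L + s) :=
    (continuousAt_const.eventually_lt (by fun_prop) (by simpa using hL)).and
      (continuousAt_const.eventually_lt (by fun_prop) (by simpa using h))
  obtain ⟨s, ⟨hs1, hs⟩, hs0⟩ :=
    ((hnear.filter_mono nhdsWithin_le_nhds).and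
      (self_mem_nhdsWithin : Ioi (0 : ℝ) ∈ 𝓝[>] 0)).exists
  exact ⟨L - s, L + s, hs1.le, by linarith, by linarith, hs⟩

namespace SolvesSuarezSchopf

variable {α τ t₀ K r T : ℝ} {x : ℝ → ℝ}

lemma continuousOn (h : SolvesSuarezSchopf α τ t₀ x) : ContinuousOn x (Ici t₀) :=
  fun t ht => (h t ht).continuousWithinAt

lemma hasDerivWithinAt_sq (h : SolvesSuarezSchopf α τ t₀ x) {t : ℝ} (ht : t₀ ≤ t) :
    HasDerivWithinAt (fun s => x s ^ 2)
      (2 * x t * (x t - α * x (t - τ) - x t ^ 3)) (Ici t) t :=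
  (((h t ht).fun_pow 2).mono (Ici_subset_Ici.2 ht)).congr_deriv (by push_cast; ring)

lemma abs_le_on_Icc {b : ℝ} (h : SolvesSuarezSchopf α τ t₀ x) (hα : 0 ≤ α) (hT : t₀ ≤ T)
    (hr : 1 ≤ r) (hδ : 0 < r ^ 3 - r - α * K) (hdelay : ∀ s ∈ Ico T b, |x (s - τ)| ≤ K)
    (hxT : |x T| ≤ r) : ∀ t ∈ Icc T b, |x t| ≤ r := by
  have hsq : ∀ t ∈ Icc T b, x t ^ 2 ≤ r ^ 2 := by
    refine image_le_of_deriv_right_lt_deriv_boundary (B' := fun _ => 0)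
      ((h.continuousOn.mono fun s hs => hT.trans hs.1).pow 2)
      (fun t ht => h.hasDerivWithinAt_sq (hT.trans ht.1))
      (sq_le_sq' (by linarith [neg_abs_le (x T)]) ((le_abs_self _).trans hxT))
      (fun _ => hasDerivAt_const _ _) fun t ht hxt => ?_
    have hrt : |x t| = r :=
      (sq_eq_sq₀ (abs_nonneg _) (by linarith)).1 (by rw [sq_abs]; exact hxt)
    have := two_mul_mul_sub_cube_le hα hr hδ hrt.ge (hdelay t ht)
    nlinarith
  exact fun t ht => abs_le_of_sq_le_sq (hsq t ht) (by linarith)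

lemma exists_abs_le (h : SolvesSuarezSchopf α τ t₀ x) (hα : 0 ≤ α) (hT : t₀ ≤ T) (hr : 1 ≤ r)
    (hδ : 0 < r ^ 3 - r - α * K) (hdelay : ∀ s, T ≤ s → |x (s - τ)| ≤ K) :
    ∃ t, T ≤ t ∧ |x t| ≤ r := by
  by_contra! hout
  set δ := 2 * r * (r ^ 3 - r - α * K)
  have hδ0 : 0 < δ := by positivity
  set b := T + (x T ^ 2 + 1) / δ
  have hTb : T ≤ b := le_add_of_nonneg_right (by positivity)
  have hdecay := image_le_of_deriv_right_le_deriv_boundary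
    (f := fun s => x s ^ 2) (B := fun t => x T ^ 2 - δ * (t - T)) (B' := fun _ => -δ)
    ((h.continuousOn.mono fun s hs => hT.trans hs.1).pow 2)
    (fun t ht => h.hasDerivWithinAt_sq (hT.trans ht.1)) (by simp) (by fun_prop)
    (fun t _ => ((((hasDerivAt_id t).sub_const T).const_mul δ).const_sub _).hasDerivWithinAt
      |>.congr_deriv (by simp))
    (fun t ht => two_mul_mul_sub_cube_le hα hr hδ (hout t ht.1).le (hdelay t ht.1))
    ⟨hTb, le_rfl⟩
  have hcancel : δ * (b - T) = x T ^ 2 + 1 := by simp only [b]; field_simp; ring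
  nlinarith [sq_nonneg (x b)]

lemma eventually_abs_le (h : SolvesSuarezSchopf α τ t₀ x) (hα : 0 ≤ α) (hr : 1 ≤ r)
    (hδ : 0 < r ^ 3 - r - α * K) (hK : ∀ᶠ t in atTop, |x t| ≤ K) :
    ∀ᶠ t in atTop, |x t| ≤ r := by
  obtain ⟨T₀, hT₀⟩ := eventually_atTop.1 hK
  set T := max t₀ (T₀ + τ)
  have hdelay : ∀ s, T ≤ s → |x (s - τ)| ≤ K := fun s hs =>
    hT₀ _ (by linarith [le_max_right t₀ (T₀ + τ)])
  obtain ⟨t₁, hTt₁, hx₁⟩ := h.exists_abs_le hα (le_max_left _ _) hr hδ hdelay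
  refine eventually_atTop.2 ⟨t₁, fun t ht => ?_⟩
  exact h.abs_le_on_Icc hα ((le_max_left _ _).trans hTt₁) hr hδ
    (fun s hs => hdelay s (hTt₁.trans hs.1)) hx₁ t ⟨ht, le_rfl⟩

lemma abs_le_of_abs_le_on_initial (h : SolvesSuarezSchopf α τ t₀ x) (hα : 0 ≤ α) (hτ : 0 < τ)
    (hK : 1 ≤ K) (hδ : 0 < K ^ 3 - K - α * K) (hinit : ∀ s ∈ Icc (t₀ - τ) t₀, |x s| ≤ K) :
    ∀ s, t₀ - τ ≤ s → |x s| ≤ K := by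
  have hsteps : ∀ n : ℕ, ∀ s ∈ Icc (t₀ - τ) (t₀ + n * τ), |x s| ≤ K := by
    intro n
    induction n with
    | zero => simpa using hinit
    | succ n ih =>
      have hnτ : 0 ≤ n * τ := by positivity
      intro s hs
      rcases le_total s (t₀ + n * τ) with hs' | hs'
      · exact ih s ⟨hs.1, hs'⟩
      · refine h.abs_le_on_Icc hα (b := t₀ + (n + 1) * τ) (by linarith) hK hδ
          (fun u hu => ih _ ⟨by linarith [hu.1], by linarith [hu.2]⟩)
          (ih _ ⟨by linarith, le_rfl⟩) s ⟨hs', ?_⟩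
        exact_mod_cast hs.2
  intro s hs
  obtain ⟨n, hn⟩ := exists_nat_ge ((s - t₀) / τ)
  exact hsteps n s ⟨hs, by rw [div_le_iff₀ hτ] at hn; linarith⟩

lemma isBoundedUnder_abs (h : SolvesSuarezSchopf α τ t₀ x) (hα : 0 < α) (hτ : 0 < τ)
    (hcont : ContinuousOn x (Icc (t₀ - τ) t₀)) :
    IsBoundedUnder (· ≤ ·) atTop fun t => |x t| := by
  obtain ⟨M, hM⟩ := isCompact_Icc.exists_bound_of_continuousOn hcont
  set K := max M 1 + α
  have hK : 1 + α ≤ K := by simp only [K]; linarith [le_max_right M 1]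
  have hδ : 0 < K ^ 3 - K - α * K := by
    have : 1 + α < K ^ 2 := by nlinarith
    nlinarith
  have hbound := h.abs_le_of_abs_le_on_initial hα.le hτ (by linarith) hδ
    fun s hs => (hM s hs).trans (by linarith [le_max_left M 1])
  exact ⟨K, eventually_map.2 (eventually_atTop.2 ⟨t₀ - τ, hbound⟩)⟩

lemma limsup_abs_le_sqrt (h : SolvesSuarezSchopf α τ t₀ x) (hα : 0 < α)
    (hbdd : IsBoundedUnder (· ≤ ·) atTop fun t => |x t|) :
    limsup (fun t => |x t|) atTop ≤ √(1 + α) := by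
  set L := limsup (fun t => |x t|) atTop
  by_contra! hL
  have hL0 : 0 < L := (Real.sqrt_nonneg _).trans_lt hL
  have hsq : 1 + α < L ^ 2 := (Real.sqrt_lt' hL0).1 hL
  have hL1 : 1 < L := by nlinarith
  obtain ⟨r, K, hr, hrL, hLK, hδ⟩ := exists_lt_lt_of_cube_sub_pos (α := α) hL1 (by nlinarith)
  have hK : ∀ᶠ t in atTop, |x t| ≤ K :=
    (eventually_lt_of_limsup_lt hLK hbdd).mono fun _ => le_of_lt
  have hLr : L ≤ r :=
    limsup_le_of_le (isCoboundedUnder_le_of_le atTop fun t => abs_nonneg (x t))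
      (h.eventually_abs_le hα.le hr hδ hK)
  linarith

end SolvesSuarezSchopf

/-- Ultimate dissipativity of the Suarez–Schopf delayed oscillator
`x'(t) = x(t) - α x(t-τ) - x(t)³`: every solution defined on `[t₀ - τ, ∞)` satisfies
`limsup_{t→∞} |x(t)| ≤ γ` with `γ = √(1+α)`; that is, the solution eventually enters
any neighborhood of the dissipativity ball of radius `γ`. -/
theorem suarez_schopf_ultimate_bound (α τ γ t₀ : ℝ) (x : ℝ → ℝ)
    (hα : α ∈ Set.Ioo (0 : ℝ) 1) (hτ : 0 < τ) (hγ : γ = Real.sqrt (1 + α))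
    (hcont : ContinuousOn x (Set.Ici (t₀ - τ)))
    (hderiv : ∀ t, t₀ ≤ t →
      HasDerivWithinAt x (x t - α * x (t - τ) - (x t) ^ 3) (Set.Ici t₀) t) :
    Filter.limsup (fun t => |x t|) Filter.atTop ≤ γ ∧
    ∀ ε > (0 : ℝ), ∃ T : ℝ, ∀ t, T ≤ t → |x t| ≤ γ + ε := by
  have hsol : SolvesSuarezSchopf α τ t₀ x := hderiv
  have hbdd := hsol.isBoundedUnder_abs hα.1 hτ (hcont.mono Icc_subset_Ici_self)
  have hlimsup := hsol.limsup_abs_le_sqrt hα.1 hbdd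
  subst hγ
  refine ⟨hlimsup, fun ε hε => eventually_atTop.1 ?_⟩
  exact (eventually_lt_of_limsup_lt (by linarith) hbdd).mono fun _ => le_of_lt
end

section
/- Let α ∈ (0,1), τ > 0, A ≥ 0, and let W : ℝ → ℝ be continuous with |W(t)| ≤ A for all t. Let ρ > 0 satisfy ρ³ ≥ (1 + α)ρ + A, and let t₀ ∈ ℝ. Suppose x : [t₀ − τ, ∞) → ℝ is continuous, differentiable on [t₀, ∞), satisfies x'(t) = x(t) − α x(t − τ) − x(t)³ + W(t) for all t ≥ t₀, and |x(s)| ≤ ρ for all s ∈ [t₀ − τ, t₀]. Then |x(t)| ≤ ρ for all t ≥ t₀ (dissipativity of the periodically forced Suarez–Schopf model). -/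
/-!
Write the equation as `x' = x - x³ + g(t)` with `g(t) = W(t) - α x(t - τ)`. While the history
stays in `[-ρ, ρ]`, `|g| ≤ αρ + A`, and `ρ³ ≥ (1 + α)ρ + A` makes the field strictly inward at
`±(ρ + ε)` for every `ε > 0`; the fencing theorem therefore keeps `x` in `[-ρ, ρ]` for another
delay interval of length `τ`. Stepping forward by `τ` covers all `t ≥ t₀`.
-/

open Set

lemma sub_cube_add_neg {ρ c y v : ℝ} (hρ : 0 < ρ) (hρc : ρ + c ≤ ρ ^ 3) (hy : ρ < y)
    (hv : |v| ≤ c) : y - y ^ 3 + v < 0 := by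
  have hc : 0 ≤ c := (abs_nonneg v).trans hv
  have hρ1 : 1 ≤ ρ ^ 2 := by nlinarith
  have hgap : 0 < (y - ρ) * (y ^ 2 + y * ρ + ρ ^ 2 - 1) :=
    mul_pos (sub_pos.2 hy) (by nlinarith)
  -- `hgap` is `(y³ - y) - (ρ³ - ρ)`.
  linarith [(abs_le.1 hv).2]

section CubicBarrier

variable {f g : ℝ → ℝ} {a b ρ c : ℝ}

lemma le_of_hasDerivWithinAt_sub_cube_add (hρ : 0 < ρ) (hρc : ρ + c ≤ ρ ^ 3)
    (hf : ContinuousOn f (Icc a b))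
    (hf' : ∀ t ∈ Ico a b, HasDerivWithinAt f (f t - f t ^ 3 + g t) (Ici t) t)
    (hg : ∀ t ∈ Ico a b, |g t| ≤ c) (ha : f a ≤ ρ) : ∀ t ∈ Icc a b, f t ≤ ρ := by
  intro t ht
  refine le_of_forall_pos_le_add fun ε hε => ?_
  refine image_le_of_deriv_right_lt_deriv_boundary' hf hf' (B' := 0) (by linarith)
    continuousOn_const (fun _ _ => hasDerivWithinAt_const _ _ _) (fun s hs hfs => ?_) ht
  exact sub_cube_add_neg hρ hρc (by linarith [hfs]) (hg s hs)

lemma abs_le_of_hasDerivWithinAt_sub_cube_add (hρ : 0 < ρ) (hρc : ρ + c ≤ ρ ^ 3)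
    (hf : ContinuousOn f (Icc a b))
    (hf' : ∀ t ∈ Ico a b, HasDerivWithinAt f (f t - f t ^ 3 + g t) (Ici t) t)
    (hg : ∀ t ∈ Ico a b, |g t| ≤ c) (ha : |f a| ≤ ρ) : ∀ t ∈ Icc a b, |f t| ≤ ρ := by
  have upper := le_of_hasDerivWithinAt_sub_cube_add hρ hρc hf hf' hg (abs_le.1 ha).2
  -- The field is odd, so `-f` solves the same equation with forcing `-g`.
  have lower := le_of_hasDerivWithinAt_sub_cube_add (f := -f) (g := -g) hρ hρc hf.neg
    (fun t ht => (hf' t ht).neg.congr_deriv (by simp only [Pi.neg_apply]; ring))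
    (fun t ht => by simpa only [Pi.neg_apply, abs_neg] using hg t ht)
    (neg_le.2 (abs_le.1 ha).1)
  intro t ht
  exact abs_le.2 ⟨neg_le.1 (lower t ht), upper t ht⟩

end CubicBarrier

lemma forall_le_of_delay_steps {p : ℝ → Prop} {a τ : ℝ} (hτ : 0 < τ)
    (hinit : ∀ t ∈ Icc (a - τ) a, p t)
    (hstep : ∀ b, a ≤ b → (∀ t ∈ Icc (a - τ) b, p t) → ∀ t ∈ Icc b (b + τ), p t) :
    ∀ t, a ≤ t → p t := by
  have hsteps : ∀ n : ℕ, ∀ t ∈ Icc (a - τ) (a + n * τ), p t := by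
    intro n
    induction n with
    | zero => simpa using hinit
    | succ n ih =>
      intro t ht
      rcases le_total t (a + n * τ) with hle | hge
      · exact ih t ⟨ht.1, hle⟩
      · have hb : a ≤ a + n * τ := le_add_of_nonneg_right (by positivity)
        exact hstep _ hb ih t ⟨hge, by push_cast at ht; linarith [ht.2]⟩
  intro t ht
  obtain ⟨n, hn⟩ := exists_nat_ge ((t - a) / τ)
  exact hsteps n t ⟨by linarith, by linarith [(div_le_iff₀ hτ).1 hn]⟩

theorem suarez_schopf_forced_dissipative_general (α τ A ρ t₀ : ℝ) (W : ℝ → ℝ) (x : ℝ → ℝ)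
    (hα : α ∈ Set.Ioo (0 : ℝ) 1) (hτ : 0 < τ)
    (hW : ∀ t : ℝ, |W t| ≤ A)
    (hρ : 0 < ρ) (hρ' : (1 + α) * ρ + A ≤ ρ ^ 3)
    (hcont : ContinuousOn x (Set.Ici (t₀ - τ)))
    (hderiv : ∀ t, t₀ ≤ t →
      HasDerivWithinAt x (x t - α * x (t - τ) - (x t) ^ 3 + W t) (Set.Ici t₀) t)
    (hinit : ∀ s ∈ Set.Icc (t₀ - τ) t₀, |x s| ≤ ρ) :
    ∀ t, t₀ ≤ t → |x t| ≤ ρ := by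
  refine forall_le_of_delay_steps hτ hinit fun b hb hhist => ?_
  have hforcing : ∀ t ∈ Ico b (b + τ), |-α * x (t - τ) + W t| ≤ α * ρ + A := fun t ht =>
    calc |-α * x (t - τ) + W t| ≤ α * |x (t - τ)| + |W t| := by
          simpa [abs_mul, abs_of_pos hα.1] using abs_add_le (-α * x (t - τ)) (W t)
      _ ≤ α * ρ + A := by
          gcongr
          exacts [hα.1.le, hhist _ ⟨by linarith [ht.1], by linarith [ht.2]⟩, hW t]
  refine abs_le_of_hasDerivWithinAt_sub_cube_add hρ (by linarith) ?_ ?_ hforcing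
    (hhist b ⟨by linarith, le_rfl⟩)
  · exact hcont.mono fun s hs => by simp only [mem_Ici]; linarith [hs.1]
  · intro t ht
    exact ((hderiv t (hb.trans ht.1)).mono (Ici_subset_Ici.2 (hb.trans ht.1))).congr_deriv
      (by ring)

/-- Dissipativity of the forced Suarez–Schopf model
`x'(t) = x(t) - α x(t-τ) - x(t)³ + W(t)` with `|W| ≤ A`: if `ρ > 0` satisfies
`ρ³ ≥ (1+α)ρ + A` and a solution defined on `[t₀ - τ, ∞)` satisfies `|x(s)| ≤ ρ` on the
initial segment `[t₀ - τ, t₀]`, then `|x(t)| ≤ ρ` for all `t ≥ t₀`. -/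
theorem suarez_schopf_forced_dissipative (α τ A ρ t₀ : ℝ) (W : ℝ → ℝ) (x : ℝ → ℝ)
    (hα : α ∈ Set.Ioo (0 : ℝ) 1) (hτ : 0 < τ) (hA : 0 ≤ A)
    (hWcont : Continuous W) (hW : ∀ t : ℝ, |W t| ≤ A)
    (hρ : 0 < ρ) (hρ' : (1 + α) * ρ + A ≤ ρ ^ 3)
    (hcont : ContinuousOn x (Set.Ici (t₀ - τ)))
    (hderiv : ∀ t, t₀ ≤ t →
      HasDerivWithinAt x (x t - α * x (t - τ) - (x t) ^ 3 + W t) (Set.Ici t₀) t)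
    (hinit : ∀ s ∈ Set.Icc (t₀ - τ) t₀, |x s| ≤ ρ) :
    ∀ t, t₀ ≤ t → |x t| ≤ ρ :=
  suarez_schopf_forced_dissipative_general α τ A ρ t₀ W x hα hτ hW hρ hρ' hcont hderiv hinit
end
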